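/- arXiv:2504.16222 — 4 statements merged into one kernel-verified Lean document; each statement's English description precedes it below -/
import Mathlib

section
/- Smith's learning rule T_{ij}(x,p) = max(0, p_j - p_i) induces a mean dynamic V_i(x,p) = sum_j [x_j max(0, p_i - p_j) - x_i max(0, p_j - p_i)] that satisfies positive correlation: for all x in the simplex X and p in R^n, p'V(x,p) >= 0, with equality if and only if V(x,p) = 0. -/
/-!
Pairing the outflow from `i` to `j` with the inflow into `j` from `i`, the payoff change `p'V`
becomes `∑ᵢ ∑ⱼ xⱼ [pᵢ - pⱼ]₊²`, a sum of nonnegative terms. It vanishes exactly when every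
switching flow `xⱼ [pᵢ - pⱼ]₊` vanishes, and then `V = 0`.
-/

open scoped BigOperators

/-- The probability simplex in `ℝ^n`. -/
def simplex (n : ℕ) : Set (Fin n → ℝ) := stdSimplex ℝ (Fin n)

/-- Dot product `p'x`. -/
def dot {n : ℕ} (p x : Fin n → ℝ) : ℝ := ∑ i, p i * x i

/-- Mean dynamic induced by Smith's learning rule `T_ij(x,p) = [p_j - p_i]_+`. -/
def smithV {n : ℕ} (x p : Fin n → ℝ) : Fin n → ℝ :=
  fun i => ∑ j, (x j * max 0 (p i - p j) - x i * max 0 (p j - p i))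

open Finset

lemma mul_max_zero_self (t : ℝ) : t * max 0 t = max 0 t ^ 2 := by
  rcases le_total t 0 with h | h <;> simp [h, sq]

lemma dot_smithV_eq_sum_sq {n : ℕ} (x p : Fin n → ℝ) :
    dot p (smithV x p) = ∑ i, ∑ j, x j * max 0 (p i - p j) ^ 2 := by
  have hswap : ∑ i, ∑ j, p i * (x i * max 0 (p j - p i))
      = ∑ i, ∑ j, p j * (x j * max 0 (p i - p j)) := sum_comm
  calc dot p (smithV x p)
      = ∑ i, ∑ j, p i * (x j * max 0 (p i - p j))
          - ∑ i, ∑ j, p i * (x i * max 0 (p j - p i)) := by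
        simp only [dot, smithV, mul_sum, mul_sub, sum_sub_distrib]
    _ = ∑ i, ∑ j, x j * ((p i - p j) * max 0 (p i - p j)) := by
        rw [hswap, ← sum_sub_distrib]
        refine sum_congr rfl fun i _ => ?_
        rw [← sum_sub_distrib]
        exact sum_congr rfl fun j _ => by ring
    _ = ∑ i, ∑ j, x j * max 0 (p i - p j) ^ 2 := by simp only [mul_max_zero_self]

lemma smithV_eq_zero_of_forall {n : ℕ} (x p : Fin n → ℝ)
    (h : ∀ i j, x j * max 0 (p i - p j) = 0) : smithV x p = 0 :=
  funext fun i => sum_eq_zero fun j _ => by rw [h i j, h j i, sub_zero]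

theorem stmt_4 {n : ℕ} (x p : Fin n → ℝ) (hx : x ∈ simplex n) :
    0 ≤ dot p (smithV x p) ∧ (dot p (smithV x p) = 0 ↔ smithV x p = 0) := by
  have hterm : ∀ i j, 0 ≤ x j * max 0 (p i - p j) ^ 2 :=
    fun i j => mul_nonneg (hx.1 j) (sq_nonneg _)
  have hrow : ∀ i, 0 ≤ ∑ j, x j * max 0 (p i - p j) ^ 2 :=
    fun i => sum_nonneg fun j _ => hterm i j
  rw [dot_smithV_eq_sum_sq]
  refine ⟨sum_nonneg fun i _ => hrow i, fun h => ?_, fun h => ?_⟩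
  · have hzero : ∀ i j, x j * max 0 (p i - p j) ^ 2 = 0 := fun i j =>
      (sum_eq_zero_iff_of_nonneg fun j _ => hterm i j).1
        ((sum_eq_zero_iff_of_nonneg fun i _ => hrow i).1 h i (mem_univ i)) j (mem_univ j)
    exact smithV_eq_zero_of_forall x p fun i j => by simpa using hzero i j
  · rw [← dot_smithV_eq_sum_sq, h]
    simp [dot]
end

section
/- The Brown-von Neumann-Nash rule T_{ij}(x,p) = [p_j - p'x]_+ induces a mean dynamic V_i(x,p) = [p_i - p'x]_+ - x_i sum_j [p_j - p'x]_+, which satisfies Nash stationarity: V(x,p) = 0 if and only if x in argmax_{y in X} y'p. -/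
open scoped BigOperators

/-- Best response set `B(p) = argmax_{y ∈ X} y'p`. -/
def BR {n : ℕ} (p : Fin n → ℝ) : Set (Fin n → ℝ) :=
  {x ∈ simplex n | ∀ y ∈ simplex n, dot y p ≤ dot x p}

/-- Mean dynamic induced by the Brown-von Neumann-Nash rule
`T_ij(x,p) = [p_j - p'x]_+`. -/
def bnnV {n : ℕ} (x p : Fin n → ℝ) : Fin n → ℝ :=
  fun i => max 0 (p i - dot p x) - x i * ∑ j, max 0 (p j - dot p x)

/-- The sum `∑ [e_i]_+ e_i = c ∑ x_i e_i` vanishes, yet its terms are the squares `[e_i]_+ ^ 2`. -/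
theorem nonpos_of_max_zero_eq_mul {ι : Type*} [Fintype ι] {e x : ι → ℝ} {c : ℝ}
    (hmean : ∑ i, x i * e i = 0) (hprop : ∀ i, max 0 (e i) = x i * c) (i : ι) : e i ≤ 0 := by
  have hterm_nonneg : ∀ j ∈ Finset.univ, 0 ≤ max 0 (e j) * e j := fun j _ => by
    rcases le_total (e j) 0 with hj | hj
    · simp [max_eq_left hj]
    · rw [max_eq_right hj]; exact mul_self_nonneg _
  have hsum_zero : ∑ j, max 0 (e j) * e j = 0 :=
    calc ∑ j, max 0 (e j) * e j = c * ∑ j, x j * e j := by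
          rw [Finset.mul_sum]
          exact Finset.sum_congr rfl fun j _ => by rw [hprop]; ring
      _ = 0 := by rw [hmean, mul_zero]
  have hi := (Finset.sum_eq_zero_iff_of_nonneg hterm_nonneg).mp hsum_zero i (Finset.mem_univ i)
  by_contra! hpos
  rw [max_eq_right hpos.le] at hi
  exact (mul_self_pos.2 hpos.ne').ne' hi

theorem dot_comm {n : ℕ} (p x : Fin n → ℝ) : dot p x = dot x p := by
  simp only [dot, mul_comm]

theorem dot_single_one_left {n : ℕ} (i : Fin n) (p : Fin n → ℝ) :
    dot (Pi.single i 1) p = p i := by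
  simp [dot, Pi.single_apply]

theorem dot_le_of_forall_le {n : ℕ} {y p : Fin n → ℝ} {c : ℝ} (hy : y ∈ simplex n)
    (hp : ∀ i, p i ≤ c) : dot y p ≤ c :=
  calc dot y p = ∑ i, y i * p i := rfl
    _ ≤ ∑ i, y i * c := Finset.sum_le_sum fun i _ => mul_le_mul_of_nonneg_left (hp i) (hy.1 i)
    _ = c := by rw [← Finset.sum_mul, hy.2, one_mul]

theorem sum_mul_excess_eq_zero {n : ℕ} {x : Fin n → ℝ} (hx : x ∈ simplex n) (p : Fin n → ℝ) :
    ∑ i, x i * (p i - dot p x) = 0 := by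
  simp only [mul_sub, Finset.sum_sub_distrib, ← Finset.sum_mul, hx.2, one_mul]
  simp only [dot, mul_comm, sub_self]

theorem mem_BR_iff_forall_le {n : ℕ} {x : Fin n → ℝ} (hx : x ∈ simplex n) (p : Fin n → ℝ) :
    x ∈ BR p ↔ ∀ i, p i ≤ dot p x := by
  rw [dot_comm]
  refine ⟨fun hBR i => ?_, fun hle => ⟨hx, fun y hy => dot_le_of_forall_le hy hle⟩⟩
  simpa only [dot_single_one_left] using hBR.2 _ (single_mem_stdSimplex ℝ i)

theorem stmt_5_general {n : ℕ} (x p : Fin n → ℝ) (hx : x ∈ simplex n) :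
    bnnV x p = 0 ↔ x ∈ BR p := by
  rw [mem_BR_iff_forall_le hx]
  constructor
  · intro hV i
    refine sub_nonpos.1 (nonpos_of_max_zero_eq_mul (sum_mul_excess_eq_zero hx p)
      (c := ∑ j, max 0 (p j - dot p x)) (fun j => ?_) i)
    exact sub_eq_zero.1 (congrFun hV j)
  · intro hle
    funext i
    simp [bnnV, fun j => max_eq_left (sub_nonpos.2 (hle j))]

theorem stmt_5 {n : ℕ} (hn : 0 < n) (x p : Fin n → ℝ) (hx : x ∈ simplex n) :
    bnnV x p = 0 ↔ x ∈ BR p :=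
  stmt_5_general x p hx
end

section
/- If V1 and V2 are maps X x R^n -> R^n each satisfying positive correlation (V(x,p) != 0 implies p'V(x,p) > 0) and Nash stationarity (V(x,p) = 0 iff x in argmax_{y in X} y'p), then for any positive constants a, b the conic combination aV1 + bV2 also satisfies positive correlation and Nash stationarity. -/
open scoped BigOperators

/-- Positive correlation. -/
def PC {n : ℕ} (V : (Fin n → ℝ) → (Fin n → ℝ) → (Fin n → ℝ)) : Prop :=
  ∀ x ∈ simplex n, ∀ p : Fin n → ℝ, V x p ≠ 0 → 0 < dot p (V x p)

/-- Nash stationarity. -/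
def NS {n : ℕ} (V : (Fin n → ℝ) → (Fin n → ℝ) → (Fin n → ℝ)) : Prop :=
  ∀ x ∈ simplex n, ∀ p : Fin n → ℝ, (V x p = 0 ↔ x ∈ BR p)

/-!
Together, PC and NS say that `V x p` vanishes when `x` is a best response to `p` and has
`0 < p'V` otherwise. Both halves survive a conic combination: at a best response both
summands vanish, and elsewhere `p'(aV₁ + bV₂) = a p'V₁ + b p'V₂` is a positive combination
of positive numbers.
-/

theorem dot_eq_dotProduct {n : ℕ} (p x : Fin n → ℝ) : dot p x = p ⬝ᵥ x := rfl

theorem pc_and_ns_iff {n : ℕ} {V : (Fin n → ℝ) → (Fin n → ℝ) → (Fin n → ℝ)} :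
    PC V ∧ NS V ↔
      (∀ x ∈ simplex n, ∀ p, x ∈ BR p → V x p = 0) ∧
        (∀ x ∈ simplex n, ∀ p, x ∉ BR p → 0 < dot p (V x p)) := by
  constructor
  · rintro ⟨hPC, hNS⟩
    exact ⟨fun x hx p => (hNS x hx p).mpr,
      fun x hx p hBR => hPC x hx p (mt (hNS x hx p).mp hBR)⟩
  · rintro ⟨hzero, hpos⟩
    refine ⟨fun x hx p hV => hpos x hx p (mt (hzero x hx p) hV),
      fun x hx p => ⟨fun hV => ?_, hzero x hx p⟩⟩
    by_contra hBR
    simpa [hV, dot_eq_dotProduct] using hpos x hx p hBR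

theorem stmt_6 {n : ℕ}
    (V₁ V₂ : (Fin n → ℝ) → (Fin n → ℝ) → (Fin n → ℝ))
    (h₁PC : PC V₁) (h₁NS : NS V₁) (h₂PC : PC V₂) (h₂NS : NS V₂)
    (a b : ℝ) (ha : 0 < a) (hb : 0 < b) :
    PC (fun x p => a • V₁ x p + b • V₂ x p) ∧
      NS (fun x p => a • V₁ x p + b • V₂ x p) := by
  obtain ⟨h₁zero, h₁pos⟩ := pc_and_ns_iff.mp ⟨h₁PC, h₁NS⟩
  obtain ⟨h₂zero, h₂pos⟩ := pc_and_ns_iff.mp ⟨h₂PC, h₂NS⟩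
  refine pc_and_ns_iff.mpr ⟨fun x hx p hBR => ?_, fun x hx p hBR => ?_⟩
  · simp [h₁zero x hx p hBR, h₂zero x hx p hBR]
  · have h₁dot := h₁pos x hx p hBR
    have h₂dot := h₂pos x hx p hBR
    rw [dot_eq_dotProduct, dotProduct_add, dotProduct_smul, dotProduct_smul]
    positivity
end

section
/- Let V: X x R^n -> R^n be continuous, satisfying positive correlation and Nash stationarity, and let F: X -> R^n be continuous. Suppose x: [0,infty) -> X and p: [0,infty) -> R^n are bounded trajectories with p'(t)V(x(t),p(t)) -> 0 and ||p(t) - F(x(t))|| -> 0 as t -> infty. Then the distance from x(t) to the Nash equilibrium set NE(F) := {x in X : x in argmax_{y in X} y'F(x)} converges to 0. -/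
/-!
Along the trajectory the defect `p'V(x, p) + ‖p - F(x)‖` tends to zero, and `(x, p)` stays in
the compact set `X × closedBall 0 M`. By positive correlation both terms of the defect are
nonnegative, so at a zero of it `p = F(x)` and `V(x, F(x)) = 0`, i.e. `x ∈ NE(F)` by Nash
stationarity. Compactness upgrades "the defect vanishes only where `infDist x NE(F)` does" to
"the distance tends to zero whenever the defect does".
-/

open Filter Topology

open scoped BigOperators

/-- Nash equilibrium set of the stationary game `F`. -/
def NE {n : ℕ} (F : (Fin n → ℝ) → (Fin n → ℝ)) : Set (Fin n → ℝ) :=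
  {x ∈ simplex n | x ∈ BR (F x)}

section Compactness

variable {E : Type*} [TopologicalSpace E] {K : Set E} {f g : E → ℝ}

theorem IsCompact.exists_pos_forall_abs_lt_of_eq_zero_imp (hK : IsCompact K)
    (hf : Continuous f) (hg : Continuous g) (hfg : ∀ w ∈ K, f w = 0 → g w = 0)
    {ε : ℝ} (hε : 0 < ε) : ∃ δ > 0, ∀ w ∈ K, |f w| < δ → |g w| < ε := by
  have hC : IsCompact (K ∩ {w | ε ≤ |g w|}) :=
    hK.inter_right (isClosed_le continuous_const hg.abs)
  have hfC : ∀ w ∈ K ∩ {w | ε ≤ |g w|}, 0 < |f w| := by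
    rintro w ⟨hwK, hwg⟩
    refine abs_pos.mpr fun hfw => ?_
    simp only [Set.mem_ofPred_eq, hfg w hwK hfw, abs_zero] at hwg
    linarith
  obtain ⟨δ, hδ, hδC⟩ := hC.exists_forall_le' hf.abs.continuousOn hfC
  refine ⟨δ, hδ, fun w hwK hfw => ?_⟩
  by_contra! hgw
  linarith [hδC w ⟨hwK, hgw⟩]

theorem IsCompact.tendsto_zero_of_tendsto_zero_of_eq_zero_imp (hK : IsCompact K)
    (hf : Continuous f) (hg : Continuous g) (hfg : ∀ w ∈ K, f w = 0 → g w = 0)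
    {ι : Type*} {l : Filter ι} {z : ι → E} (hzK : ∀ᶠ t in l, z t ∈ K)
    (hfz : Tendsto (fun t => f (z t)) l (𝓝 0)) : Tendsto (fun t => g (z t)) l (𝓝 0) := by
  rw [Metric.tendsto_nhds] at hfz ⊢
  intro ε hε
  obtain ⟨δ, hδ, hδε⟩ := hK.exists_pos_forall_abs_lt_of_eq_zero_imp hf hg hfg hε
  filter_upwards [hzK, hfz δ hδ] with t htK htf
  rw [Real.dist_eq, sub_zero] at htf ⊢
  exact hδε (z t) htK htf

end Compactness

theorem continuous_dot {n : ℕ} :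
    Continuous fun q : (Fin n → ℝ) × (Fin n → ℝ) => dot q.1 q.2 := by
  unfold dot
  fun_prop

section PositiveCorrelation

variable {n : ℕ} {V : (Fin n → ℝ) → (Fin n → ℝ) → (Fin n → ℝ)}
  (hPC : ∀ y ∈ simplex n, ∀ q : Fin n → ℝ, V y q ≠ 0 → 0 < dot q (V y q))
  {y : Fin n → ℝ} (hy : y ∈ simplex n) (q : Fin n → ℝ)
include hPC hy

theorem dot_nonneg_of_posCorr : 0 ≤ dot q (V y q) := by
  by_cases hV : V y q = 0
  · simp [hV, dot]
  · exact (hPC y hy q hV).le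

theorem eq_zero_of_dot_eq_zero_of_posCorr (h : dot q (V y q) = 0) : V y q = 0 := by
  by_contra hV
  exact (hPC y hy q hV).ne' h

end PositiveCorrelation

theorem stmt_16_general {n : ℕ}
    (V : (Fin n → ℝ) → (Fin n → ℝ) → (Fin n → ℝ))
    (hVcont : Continuous fun q : (Fin n → ℝ) × (Fin n → ℝ) => V q.1 q.2)
    (hPC : ∀ y ∈ simplex n, ∀ q : Fin n → ℝ, V y q ≠ 0 → 0 < dot q (V y q))
    (hNS : ∀ y ∈ simplex n, ∀ q : Fin n → ℝ, (V y q = 0 ↔ y ∈ BR q))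
    (F : (Fin n → ℝ) → (Fin n → ℝ)) (hFcont : Continuous F)
    (x p : ℝ → Fin n → ℝ)
    (hxX : ∀ t, x t ∈ simplex n)
    (hpBdd : ∃ M : ℝ, ∀ t, ‖p t‖ ≤ M)
    (hcorr : Filter.Tendsto (fun t => dot (p t) (V (x t) (p t)))
      Filter.atTop (nhds 0))
    (happrox : Filter.Tendsto (fun t => ‖p t - F (x t)‖) Filter.atTop (nhds 0)) :
    Filter.Tendsto (fun t => Metric.infDist (x t) (NE F))
      Filter.atTop (nhds 0) := by
  obtain ⟨M, hM⟩ := hpBdd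
  have hK : IsCompact (simplex n ×ˢ Metric.closedBall (0 : Fin n → ℝ) M) :=
    (isCompact_stdSimplex ℝ (Fin n)).prod (isCompact_closedBall 0 M)
  have hdefect : Continuous fun w : (Fin n → ℝ) × (Fin n → ℝ) =>
      dot w.2 (V w.1 w.2) + ‖w.2 - F w.1‖ :=
    (continuous_dot.comp (continuous_snd.prodMk hVcont)).add
      (continuous_snd.sub (hFcont.comp continuous_fst)).norm
  refine hK.tendsto_zero_of_tendsto_zero_of_eq_zero_imp (z := fun t => (x t, p t)) hdefect
    ((Metric.continuous_infDist_pt _).comp continuous_fst) ?_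
    (Eventually.of_forall fun t => ⟨hxX t, mem_closedBall_zero_iff.mpr (hM t)⟩)
    (by simpa using hcorr.add happrox)
  rintro ⟨y, q⟩ ⟨hy, -⟩ hzero
  obtain ⟨hdot, hq⟩ : dot q (V y q) = 0 ∧ ‖q - F y‖ = 0 :=
    (add_eq_zero_iff_of_nonneg (dot_nonneg_of_posCorr hPC hy q) (norm_nonneg _)).mp hzero
  have hV := eq_zero_of_dot_eq_zero_of_posCorr hPC hy q hdot
  obtain rfl : q = F y := sub_eq_zero.mp (norm_eq_zero.mp hq)
  exact Metric.infDist_zero_of_mem ⟨hy, (hNS y hy _).mp hV⟩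

theorem stmt_16 {n : ℕ} (hn : 0 < n)
    (V : (Fin n → ℝ) → (Fin n → ℝ) → (Fin n → ℝ))
    (hVcont : Continuous fun q : (Fin n → ℝ) × (Fin n → ℝ) => V q.1 q.2)
    (hPC : ∀ y ∈ simplex n, ∀ q : Fin n → ℝ, V y q ≠ 0 → 0 < dot q (V y q))
    (hNS : ∀ y ∈ simplex n, ∀ q : Fin n → ℝ, (V y q = 0 ↔ y ∈ BR q))
    (F : (Fin n → ℝ) → (Fin n → ℝ)) (hFcont : Continuous F)
    (x p : ℝ → Fin n → ℝ)
    (hxX : ∀ t, x t ∈ simplex n)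
    (hpBdd : ∃ M : ℝ, ∀ t, ‖p t‖ ≤ M)
    (hcorr : Filter.Tendsto (fun t => dot (p t) (V (x t) (p t)))
      Filter.atTop (nhds 0))
    (happrox : Filter.Tendsto (fun t => ‖p t - F (x t)‖) Filter.atTop (nhds 0)) :
    Filter.Tendsto (fun t => Metric.infDist (x t) (NE F))
      Filter.atTop (nhds 0) :=
  stmt_16_general V hVcont hPC hNS F hFcont x p hxX hpBdd hcorr happrox
end
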